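/- In the staggered DGP, the identified set for the cohort-time ATT equals Θ(g, t) = [ATT(g,t) + (t² − T²)μ(g), ATT(g,t) + t²μ(g)], and ATT(g,t) ∈ Θ(g,t) whenever μ(g) ≥ 0 and 0 ≤ t ≤ T. -/
import Mathlib

theorem staggered_identified_set
    (T t μg ATT θDIM : ℝ) (hμ : 0 ≤ μg) (ht₀ : 0 ≤ t) (htT : t ≤ T)
    (hDIM : θDIM = ATT + (1 + t^2) * μg) :
    Set.Icc (θDIM - (1 + T^2) * μg) (θDIM - μg)
      = Set.Icc (ATT + (t^2 - T^2) * μg) (ATT + t^2 * μg) ∧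
    ATT ∈ Set.Icc (ATT + (t^2 - T^2) * μg) (ATT + t^2 * μg) := by
  subst hDIM
  constructor
  · congr 1 <;> ring
  · constructor <;> nlinarith [mul_nonneg (mul_nonneg (sub_nonneg.2 htT) (by linarith : (0:ℝ) ≤ T + t)) hμ, mul_nonneg (mul_nonneg ht₀ ht₀) hμ]
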